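/- arXiv:1909.00566 — 3 statements merged into one kernel-verified Lean document; each statement's English description precedes it below -/
import Mathlib

section
/- Let L be a linear subspace of the space S^n of real symmetric n×n matrices whose intersection with the positive definite cone S^n_+ is nonempty, and let W be a positive definite real symmetric n×n matrix. Then there exists a unique Σ̂ ∈ L ∩ S^n_+ maximizing the dual log-likelihood ℓ∨ over L ∩ S^n_+, i.e. ℓ∨(Σ) < ℓ∨(Σ̂) for every Σ ∈ L ∩ S^n_+ with Σ ≠ Σ̂. -/
open Matrix Filter Topology

/-!
The dual log-likelihood is strictly concave on the positive definite cone because `log det` is: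
writing `A = Rᴴ R` and `B = Rᴴ C R`, the congruence by `R` reduces the concavity inequality
between `A` and `B` to the one between `1` and `C`, which is the strict concavity of `log` applied
to the eigenvalues of `C`. Hence a maximiser over the convex set `L ∩ S^n_+` is unique and strict.

A maximiser exists by compactness. The function `det Σ · exp (-tr (W Σ))` agrees with `exp ∘ ℓ∨`
on `S^n_+` but is continuous on the closed positive semidefinite cone, and it is small where
`tr Σ` is large, since `tr (W Σ) ≥ ε tr Σ` and `det Σ ≤ n! (tr Σ)^n`. Its maximiser over `L` in
the semidefinite cone has positive determinant, so it is positive definite.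
-/

theorem StrictConcaveOn.lt_of_isMaxOn {𝕜 E β : Type*} [Field 𝕜] [LinearOrder 𝕜]
    [IsStrictOrderedRing 𝕜] [AddCommMonoid β] [PartialOrder β] [IsOrderedAddMonoid β]
    [AddCommMonoid E] [SMul 𝕜 E] [Module 𝕜 β] [PosSMulMono 𝕜 β] {s : Set E} {f : E → β}
    {x y : E} (hf : StrictConcaveOn 𝕜 s f) (hx : x ∈ s) (hmax : IsMaxOn f s x) (hy : y ∈ s)
    (hyx : y ≠ x) : f y < f x :=
  (hmax hy).lt_of_ne fun h => hyx <| hf.eq_of_isMaxOn (fun _ hz => h ▸ hmax hz) hmax hy hx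

namespace Matrix

variable {n : Type*}

lemma convex_setOf_posDef : Convex ℝ {A : Matrix n n ℝ | A.PosDef} := by
  intro A hA B hB a b ha hb hab
  rcases ha.eq_or_lt with rfl | ha
  · simpa [show b = 1 by linarith] using hB
  · exact (hA.smul ha).add_posSemidef (hB.posSemidef.smul hb)

variable [Fintype n]

lemma PosSemidef.diag_le_trace {A : Matrix n n ℝ} (hA : A.PosSemidef) (i : n) :
    A i i ≤ A.trace :=
  Finset.single_le_sum (f := A.diag) (fun _ _ => hA.diag_nonneg) (Finset.mem_univ i)

lemma PosSemidef.abs_apply_le_trace {A : Matrix n n ℝ} (hA : A.PosSemidef) (i j : n) :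
    |A i j| ≤ A.trace := by
  have hminor := (hA.submatrix ![i, j]).det_nonneg
  simp only [det_fin_two, submatrix_apply, cons_val_zero, cons_val_one] at hminor
  have hsymm : A j i = A i j := by simpa using hA.isHermitian.apply i j
  refine abs_le_of_sq_le_sq ?_ hA.trace_nonneg
  calc A i j ^ 2 ≤ A i i * A j j := by rw [hsymm] at hminor; linarith
    _ ≤ A.trace ^ 2 := by
      rw [sq]
      exact mul_le_mul (hA.diag_le_trace i) (hA.diag_le_trace j) hA.diag_nonneg hA.trace_nonneg

lemma isClosed_setOf_posSemidef : IsClosed {A : Matrix n n ℝ | A.PosSemidef} := by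
  simp only [posSemidef_iff_dotProduct_mulVec, Set.ofPred_and, Set.ofPred_forall]
  exact (isClosed_eq continuous_id.matrix_conjTranspose continuous_id).inter <|
    isClosed_iInter fun x => isClosed_le continuous_const <|
      continuous_const.dotProduct (continuous_id.matrix_mulVec continuous_const)

lemma isCompact_setOf_posSemidef_trace_le (R : ℝ) :
    IsCompact {A : Matrix n n ℝ | A.PosSemidef ∧ A.trace ≤ R} := by
  have hbox : IsCompact (Set.univ.pi fun _ : n => Set.univ.pi fun _ : n => Set.Icc (-R) R) :=
    isCompact_univ_pi fun _ => isCompact_univ_pi fun _ => isCompact_Icc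
  refine hbox.of_isClosed_subset
    (isClosed_setOf_posSemidef.inter (isClosed_le continuous_id.matrix_trace continuous_const))
    fun A ⟨hA, hR⟩ i _ j _ => abs_le.mp ((hA.abs_apply_le_trace i j).trans hR)

variable [DecidableEq n]

lemma PosSemidef.det_le_factorial_mul_trace_pow {A : Matrix n n ℝ} (hA : A.PosSemidef) :
    A.det ≤ (Fintype.card n).factorial * A.trace ^ Fintype.card n := by
  have := det_le (abv := AbsoluteValue.abs) hA.abs_apply_le_trace
  simp only [AbsoluteValue.abs_apply, nsmul_eq_mul] at this
  exact (le_abs_self _).trans this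

open scoped MatrixOrder in
lemma PosSemidef.trace_mul_nonneg {A B : Matrix n n ℝ} (hA : A.PosSemidef) (hB : B.PosSemidef) :
    0 ≤ (A * B).trace := by
  obtain ⟨C, rfl⟩ := CStarAlgebra.nonneg_iff_eq_star_mul_self.mp hB.nonneg
  rw [← mul_assoc, trace_mul_comm, ← mul_assoc]
  exact (hA.mul_mul_conjTranspose_same C).trace_nonneg

open scoped MatrixOrder in
lemma PosDef.exists_pos_smul_trace_le_trace_mul {W : Matrix n n ℝ} (hW : W.PosDef) :
    ∃ ε > 0, ∀ A : Matrix n n ℝ, A.PosSemidef → ε * A.trace ≤ (W * A).trace := by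
  obtain ⟨ε, hε, hεW⟩ : ∃ ε > 0, algebraMap ℝ (Matrix n n ℝ) ε ≤ W := by
    rcases subsingleton_or_nontrivial (Matrix n n ℝ)
    · exact ⟨1, one_pos, (Subsingleton.elim _ _).le⟩
    · exact (CFC.exists_pos_algebraMap_le_iff hW.isHermitian.isSelfAdjoint).2
        fun x hx => hW.isStrictlyPositive.spectrum_pos hx
  refine ⟨ε, hε, fun A hA => ?_⟩
  have := (le_iff.mp hεW).trace_mul_nonneg hA
  rw [sub_mul, trace_sub, Algebra.algebraMap_eq_smul_one, smul_mul, one_mul, trace_smul,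
    smul_eq_mul] at this
  linarith

lemma PosDef.exists_trace_le_of_le_det_mul_exp {W : Matrix n n ℝ} (hW : W.PosDef)
    {c : ℝ} (hc : 0 < c) :
    ∃ R, ∀ S : Matrix n n ℝ, S.PosSemidef →
      c ≤ S.det * Real.exp (-(W * S).trace) → S.trace ≤ R := by
  obtain ⟨ε, hε, hWε⟩ := hW.exists_pos_smul_trace_le_trace_mul
  set N := Fintype.card n
  have htend : Tendsto (fun t : ℝ => N.factorial * t ^ N * Real.exp (-(ε * t))) atTop (𝓝 0) := by
    have := ((Real.tendsto_pow_mul_exp_neg_atTop_nhds_zero N).comp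
      (tendsto_id.const_mul_atTop hε)).const_mul (N.factorial / ε ^ N)
    rw [mul_zero] at this
    refine this.congr fun t => ?_
    simp only [Function.comp_apply, id, mul_pow]
    field_simp
  obtain ⟨R, hR⟩ := eventually_atTop.mp (htend.eventually_lt_const hc)
  refine ⟨R, fun S hS hcS => le_of_not_gt fun hRS => (hR _ hRS.le).not_ge ?_⟩
  calc c ≤ S.det * Real.exp (-(W * S).trace) := hcS
    _ ≤ N.factorial * S.trace ^ N * Real.exp (-(ε * S.trace)) :=
      mul_le_mul hS.det_le_factorial_mul_trace_pow
        (Real.exp_le_exp.2 (neg_le_neg (hWε S hS))) (Real.exp_pos _).le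
        (mul_nonneg (by positivity) (pow_nonneg hS.trace_nonneg N))

lemma IsHermitian.det_smul_one_add_smul {C : Matrix n n ℝ} (hC : C.IsHermitian) (a b : ℝ) :
    (a • 1 + b • C).det = ∏ i, (a + b * hC.eigenvalues i) := by
  conv_lhs => rw [hC.spectral_theorem, ← map_one (Unitary.conjStarAlgAut ℝ _ hC.eigenvectorUnitary),
    ← map_smul, ← map_smul, ← map_add]
  rw [det_map, ← diagonal_one, ← diagonal_smul, ← diagonal_smul, diagonal_add, det_diagonal]
  simp

lemma IsHermitian.eq_one_of_eigenvalues_eq_one {C : Matrix n n ℝ} (hC : C.IsHermitian)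
    (h : ∀ i, hC.eigenvalues i = 1) : C = 1 := by
  have hdiag : (RCLike.ofReal ∘ hC.eigenvalues : n → ℝ) = 1 := funext fun i => by simp [h i]
  rw [hC.spectral_theorem, hdiag, diagonal_one', map_one]

lemma PosDef.smul_log_det_lt_log_det_smul_one_add_smul {C : Matrix n n ℝ} (hC : C.PosDef)
    (hC1 : C ≠ 1) {a b : ℝ} (ha : 0 < a) (hb : 0 < b) (hab : a + b = 1) :
    b * Real.log C.det < Real.log (a • 1 + b • C).det := by
  obtain ⟨i, hi⟩ : ∃ i, hC.isHermitian.eigenvalues i ≠ 1 := by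
    by_contra! h
    exact hC1 (hC.isHermitian.eq_one_of_eigenvalues_eq_one h)
  have hμ : ∀ i, hC.isHermitian.eigenvalues i ∈ Set.Ioi 0 := hC.eigenvalues_pos
  rw [hC.isHermitian.det_smul_one_add_smul, hC.isHermitian.det_eq_prod_eigenvalues,
    RCLike.ofReal_real_eq_id, Function.id_def]
  generalize hC.isHermitian.eigenvalues = μ at hi hμ ⊢
  have hlog (j : n) : a * Real.log 1 + b * Real.log (μ j) ≤ Real.log (a * 1 + b * μ j) :=
    strictConcaveOn_log_Ioi.concaveOn.2 (Set.mem_Ioi.2 one_pos) (hμ j) ha.le hb.le hab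
  have hlog_lt : a * Real.log 1 + b * Real.log (μ i) < Real.log (a * 1 + b * μ i) :=
    strictConcaveOn_log_Ioi.2 (Set.mem_Ioi.2 one_pos) (hμ i) (Ne.symm hi) ha hb hab
  simp only [Real.log_one, mul_zero, zero_add, mul_one] at hlog hlog_lt
  have hpos (j : n) : 0 < a + b * μ j := by have : 0 < μ j := hμ j; positivity
  rw [Real.log_prod (fun j _ => (hpos j).ne'), Real.log_prod (fun j _ => (hμ j).ne'),
    Finset.mul_sum]
  exact Finset.sum_lt_sum (fun j _ => hlog j) ⟨i, Finset.mem_univ i, hlog_lt⟩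

open scoped MatrixOrder in
theorem strictConcaveOn_log_det :
    StrictConcaveOn ℝ {A : Matrix n n ℝ | A.PosDef} fun A => Real.log A.det := by
  refine ⟨convex_setOf_posDef, fun A hA B hB hAB a b ha hb hab => ?_⟩
  obtain ⟨R, hR, rfl⟩ := CStarAlgebra.isStrictlyPositive_iff_eq_star_mul_self.mp
    hA.isStrictlyPositive
  have hRR : R⁻¹ * R = 1 := nonsing_inv_mul R ((isUnit_iff_isUnit_det R).mp hR)
  set C := star R⁻¹ * B * R⁻¹
  have hBC : B = star R * C * R := by
    simp only [C, ← mul_assoc, ← star_mul, hRR, star_one, one_mul]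
    rw [mul_assoc, hRR, mul_one]
  rw [hBC] at hB hAB ⊢
  have hC : C.PosDef := hR.posDef_star_left_conjugate_iff.mp hB
  have hC1 : C ≠ 1 := fun h => hAB (by rw [h, mul_one])
  have hmix : a • (star R * R) + b • (star R * C * R) = star R * (a • 1 + b • C) * R := by
    simp only [mul_add, add_mul, Matrix.mul_smul, Matrix.smul_mul, mul_one]
  have hlog {X : Matrix n n ℝ} (hX : X.PosDef) :
      Real.log (star R * X * R).det = Real.log (star R * R).det + Real.log X.det := by
    rw [det_mul, det_mul, det_mul, mul_right_comm, Real.log_mul _ hX.det_pos.ne']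
    simpa using hA.det_pos.ne'
  have key := hC.smul_log_det_lt_log_det_smul_one_add_smul hC1 ha hb hab
  simp only [smul_eq_mul, hmix, hlog hC, hlog (convex_setOf_posDef PosDef.one hC ha.le hb.le hab)]
  obtain rfl : a = 1 - b := by linarith
  linarith

end Matrix

section DualLogLikelihood

variable {n : Type*} [Fintype n] [DecidableEq n]

noncomputable def dualLogLikelihood (W S : Matrix n n ℝ) : ℝ := Real.log S.det - (W * S).trace

theorem strictConcaveOn_dualLogLikelihood (W : Matrix n n ℝ) :
    StrictConcaveOn ℝ {S : Matrix n n ℝ | S.PosDef} (dualLogLikelihood W) :=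
  strictConcaveOn_log_det.sub_convexOn
    (((traceLinearMap n ℝ ℝ).comp (LinearMap.mulLeft ℝ W)).convexOn convex_setOf_posDef)

theorem exists_isMaxOn_dualLogLikelihood {W : Matrix n n ℝ} (hW : W.PosDef)
    {s : Set (Matrix n n ℝ)} (hs : IsClosed s) (hne : (s ∩ {S | S.PosDef}).Nonempty) :
    ∃ S ∈ s ∩ {S | S.PosDef}, IsMaxOn (dualLogLikelihood W) (s ∩ {S | S.PosDef}) S := by
  set g : Matrix n n ℝ → ℝ := fun S => S.det * Real.exp (-(W * S).trace)
  have hg : Continuous g :=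
    continuous_id.matrix_det.mul (continuous_const.matrix_mul continuous_id).matrix_trace.neg.rexp
  have hg_eq {S : Matrix n n ℝ} (hS : S.PosDef) : g S = Real.exp (dualLogLikelihood W S) := by
    simp only [g, dualLogLikelihood, Real.exp_sub, Real.exp_log hS.det_pos, Real.exp_neg,
      div_eq_mul_inv]
  obtain ⟨A, hAs, hA⟩ := hne
  obtain ⟨R, hR⟩ := hW.exists_trace_le_of_le_det_mul_exp (c := g A) (by rw [hg_eq hA]; positivity)
  obtain ⟨S, ⟨hSs, hS⟩, hmax⟩ := hg.continuousOn.exists_isMaxOn'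
    (hs.inter isClosed_setOf_posSemidef) ⟨hAs, hA.posSemidef⟩ <|
    eventually_inf_principal.2 <| mem_of_superset
      (isCompact_setOf_posSemidef_trace_le R).compl_mem_cocompact
      fun T hT ⟨_, hTpsd⟩ => le_of_not_gt fun hAT => hT ⟨hTpsd, hR T hTpsd hAT.le⟩
  have hSpd : S.PosDef := by
    refine (hS.posDef_iff_det_ne_zero).mpr fun h0 => ?_
    have := hmax ⟨hAs, hA.posSemidef⟩
    simp only [Set.mem_ofPred_eq, g, h0, zero_mul, hg_eq hA] at this
    exact (Real.exp_pos _).not_ge this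
  refine ⟨S, ⟨hSs, hSpd⟩, fun T ⟨hTs, hT⟩ => ?_⟩
  have := hmax ⟨hTs, hT.posSemidef⟩
  simp only [Set.mem_ofPred_eq, hg_eq hT, hg_eq hSpd, Real.exp_le_exp] at this
  exact this

end DualLogLikelihood

theorem dual_likelihood_unique_max_on_model_general
    (n : ℕ) (L : Submodule ℝ (Matrix (Fin n) (Fin n) ℝ))
    (hLpos : ∃ A ∈ L, A.PosDef)
    (W : Matrix (Fin n) (Fin n) ℝ) (hW : W.PosDef) :
    ∃! Shat : Matrix (Fin n) (Fin n) ℝ,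
      Shat ∈ L ∧ Shat.PosDef ∧
        ∀ Sig ∈ L, Sig.PosDef → Sig ≠ Shat →
          Real.log Sig.det - (W * Sig).trace
            < Real.log Shat.det - (W * Shat).trace := by
  have hconc : StrictConcaveOn ℝ ((L : Set _) ∩ {S | S.PosDef}) (dualLogLikelihood W) :=
    (strictConcaveOn_dualLogLikelihood W).subset Set.inter_subset_right
      (L.convex.inter convex_setOf_posDef)
  obtain ⟨A, hA, hmax⟩ := exists_isMaxOn_dualLogLikelihood hW
    (Submodule.closed_of_finiteDimensional L) hLpos
  refine ⟨A, ⟨hA.1, hA.2, fun S hSL hS hSA => hconc.lt_of_isMaxOn hA hmax ⟨hSL, hS⟩ hSA⟩, ?_⟩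
  rintro B ⟨hBL, hB, hBmax⟩
  have hBmaxOn : IsMaxOn (dualLogLikelihood W) ((L : Set _) ∩ {S | S.PosDef}) B := by
    refine isMaxOn_iff.2 fun S ⟨hSL, hS⟩ => ?_
    rcases eq_or_ne S B with rfl | hSB
    · exact le_rfl
    · exact (hBmax S hSL hS hSB).le
  exact hconc.eq_of_isMaxOn hBmaxOn hmax ⟨hBL, hB⟩ hA

/-- Let `L` be a linear subspace of the symmetric `n × n` matrices meeting the positive
definite cone, and let `W` be positive definite.  Then the dual log-likelihood
`ℓ∨(Σ) = log det Σ − tr(WΣ)` has a unique maximizer over `L ∩ S^n_+`: there is a unique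
positive definite `Σ̂ ∈ L` such that `ℓ∨(Σ) < ℓ∨(Σ̂)` for every positive definite
`Σ ∈ L` with `Σ ≠ Σ̂`. -/
theorem dual_likelihood_unique_max_on_model
    (n : ℕ) (L : Submodule ℝ (Matrix (Fin n) (Fin n) ℝ))
    (hL : ∀ A ∈ L, A.IsSymm)
    (hLpos : ∃ A ∈ L, A.PosDef)
    (W : Matrix (Fin n) (Fin n) ℝ) (hW : W.PosDef) :
    ∃! Shat : Matrix (Fin n) (Fin n) ℝ,
      Shat ∈ L ∧ Shat.PosDef ∧
        ∀ Sig ∈ L, Sig.PosDef → Sig ≠ Shat →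
          Real.log Sig.det - (W * Sig).trace
            < Real.log Shat.det - (W * Shat).trace :=
  dual_likelihood_unique_max_on_model_general n L hLpos W hW
end

section
/- Let C be a hierarchy on {1,…,n}, and for indices i, j let lca(i,j) denote the smallest member of C containing both i and j. Then the linear span in S^n of the rank-one matrices e_A e_Aᵀ, A ∈ C, equals the set of all real symmetric n×n matrices Σ = (σ_{ij}) such that σ_{ij} = σ_{kl} whenever lca(i,j) = lca(k,l). -/
open Matrix

/-!
Write `Σ_A c_A e_A e_Aᵀ` for `c : C → ℝ`. Since `i, j ∈ A ↔ lca i j ⊆ A` for `A ∈ C`, its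
`(i, j)` entry is `∑_{A ⊇ lca i j} c_A`, which depends only on `lca i j`; this gives one inclusion.
Conversely, the linear map `c ↦ (L ↦ ∑_{A ⊇ L} c_A)` on functions on the finite poset `C` is
injective (evaluate at a maximal point of the support of `c`), hence bijective, so any
prescribed values on the clades `lca i j` are attained.
-/

open Finset

noncomputable section

open scoped Classical

section UpperSum

variable (K : Type*) {α : Type*} [Field K] [PartialOrder α] [Fintype α]

def upperSum : (α → K) →ₗ[K] α → K where
  toFun f x := ∑ y with x ≤ y, f y
  map_add' f g := by ext x; simp [sum_add_distrib]
  map_smul' c f := by ext x; simp [mul_sum]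

variable {K}

lemma upperSum_apply (f : α → K) (x : α) : upperSum K f x = ∑ y with x ≤ y, f y := rfl

lemma upperSum_apply_eq_add (f : α → K) (x : α) :
    upperSum K f x = f x + ∑ y with x < y, f y := by
  have hIoi : ({y | x ≤ y} : Finset α).erase x = ({y | x < y} : Finset α) := by
    ext y
    simp [lt_iff_le_and_ne, and_comm, eq_comm]
  rw [upperSum_apply, ← add_sum_erase _ _ (mem_filter.2 ⟨mem_univ x, le_rfl⟩), hIoi]

lemma upperSum_injective : Function.Injective (upperSum K (α := α)) := by
  refine (injective_iff_map_eq_zero _).2 fun f hf => funext fun x => ?_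
  induction x using WellFoundedGT.induction with
  | _ x ih =>
    have hIoi : ∑ y with x < y, f y = 0 := sum_eq_zero fun y hy => ih y (mem_filter.1 hy).2
    simpa [hIoi] using (upperSum_apply_eq_add f x).symm.trans (congrFun hf x)

lemma upperSum_surjective : Function.Surjective (upperSum K (α := α)) :=
  LinearMap.injective_iff_surjective.1 upperSum_injective

end UpperSum

section Hierarchy

variable {ι : Type*}

def clusterMatrix (A : Set ι) : Matrix ι ι ℝ :=
  vecMulVec (A.indicator fun _ => 1) (A.indicator fun _ => 1)

lemma clusterMatrix_apply (A : Set ι) (i j : ι) :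
    clusterMatrix A i j = if i ∈ A ∧ j ∈ A then 1 else 0 := by
  by_cases hi : i ∈ A <;> by_cases hj : j ∈ A <;> simp [clusterMatrix, vecMulVec_apply, hi, hj]

def IsLcaMap (C : Set (Set ι)) (lca : ι → ι → Set ι) : Prop :=
  ∀ i j, lca i j ∈ C ∧ i ∈ lca i j ∧ j ∈ lca i j ∧ ∀ D ∈ C, i ∈ D → j ∈ D → lca i j ⊆ D

variable {C : Set (Set ι)} {lca : ι → ι → Set ι}

lemma mem_and_mem_iff_lca_subset (hlca : IsLcaMap C lca) {A : Set ι} (hA : A ∈ C) (i j : ι) :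
    i ∈ A ∧ j ∈ A ↔ lca i j ⊆ A :=
  ⟨fun h => (hlca i j).2.2.2 A hA h.1 h.2, fun h => ⟨h (hlca i j).2.1, h (hlca i j).2.2.1⟩⟩

lemma lca_comm (hlca : IsLcaMap C lca) (i j : ι) : lca i j = lca j i :=
  have h (i j : ι) : lca i j ⊆ lca j i :=
    (hlca i j).2.2.2 _ (hlca j i).1 (hlca j i).2.2.1 (hlca j i).2.1
  (h i j).antisymm (h j i)

lemma sum_smul_clusterMatrix_apply (hlca : IsLcaMap C lca) [Fintype C] (c : C → ℝ) (i j : ι) :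
    (∑ A : C, c A • clusterMatrix A.1) i j = upperSum ℝ c ⟨lca i j, (hlca i j).1⟩ := by
  simp only [Matrix.sum_apply, Matrix.smul_apply, clusterMatrix_apply,
    mem_and_mem_iff_lca_subset hlca (Subtype.prop _), smul_eq_mul, mul_ite, mul_one, mul_zero,
    upperSum_apply, sum_filter]
  rfl

end Hierarchy

end

theorem brownian_tree_span_eq_general
    (n : ℕ)
    (C : Set (Set (Fin n)))
    (lca : Fin n → Fin n → Set (Fin n))
    (hlca : ∀ i j : Fin n, lca i j ∈ C ∧ i ∈ lca i j ∧ j ∈ lca i j ∧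
      ∀ D ∈ C, i ∈ D → j ∈ D → lca i j ⊆ D) :
    (Submodule.span ℝ
        {M : Matrix (Fin n) (Fin n) ℝ | ∃ A ∈ C,
          M = Matrix.vecMulVec (A.indicator fun _ => (1 : ℝ))
                (A.indicator fun _ => (1 : ℝ))} : Set (Matrix (Fin n) (Fin n) ℝ))
      = {Sig : Matrix (Fin n) (Fin n) ℝ | Sig.IsSymm ∧
          ∀ i j p q : Fin n, lca i j = lca p q → Sig i j = Sig p q} := by
  classical
  have hrange : {M | ∃ A ∈ C, M = clusterMatrix A} = Set.range fun A : C => clusterMatrix A.1 := by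
    ext M
    simp [eq_comm]
  change (Submodule.span ℝ {M | ∃ A ∈ C, M = clusterMatrix A} : Set (Matrix (Fin n) (Fin n) ℝ)) = _
  ext M
  rw [hrange, SetLike.mem_coe, Submodule.mem_span_range_iff_exists_fun]
  constructor
  · rintro ⟨c, rfl⟩
    refine ⟨IsSymm.ext fun i j => ?_, fun i j p q h => ?_⟩
    · simp only [sum_smul_clusterMatrix_apply hlca, lca_comm hlca i j]
    · simp only [sum_smul_clusterMatrix_apply hlca, h]
  · rintro ⟨-, hM⟩
    let clade (p : Fin n × Fin n) : C := ⟨lca p.1 p.2, (hlca p.1 p.2).1⟩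
    have hfactor : Function.FactorsThrough (Function.uncurry M) clade :=
      fun p q h => hM p.1 p.2 q.1 q.2 (congrArg Subtype.val h)
    obtain ⟨c, hc⟩ := upperSum_surjective (K := ℝ) (Function.extend clade (Function.uncurry M) 0)
    refine ⟨c, ext fun i j => ?_⟩
    rw [sum_smul_clusterMatrix_apply hlca, hc]
    exact hfactor.extend_apply 0 (i, j)

/-- Let `C` be a hierarchy (laminar family containing the ground set and all singletons)
on `{1,…,n}` and let `lca i j` be the smallest member of `C` containing `i` and `j`.
Then the linear span of the rank-one matrices `e_A e_Aᵀ`, `A ∈ C`, equals the set of all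
symmetric matrices `Σ` with `Σ i j = Σ p q` whenever `lca i j = lca p q`. -/
theorem brownian_tree_span_eq
    (n : ℕ) (hn : 1 ≤ n)
    (C : Set (Set (Fin n)))
    (hne : ∀ A ∈ C, A.Nonempty)
    (huniv : Set.univ ∈ C)
    (hsingle : ∀ i : Fin n, {i} ∈ C)
    (hlaminar : ∀ A ∈ C, ∀ B ∈ C, A ⊆ B ∨ B ⊆ A ∨ Disjoint A B)
    (lca : Fin n → Fin n → Set (Fin n))
    (hlca : ∀ i j : Fin n, lca i j ∈ C ∧ i ∈ lca i j ∧ j ∈ lca i j ∧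
      ∀ D ∈ C, i ∈ D → j ∈ D → lca i j ⊆ D) :
    (Submodule.span ℝ
        {M : Matrix (Fin n) (Fin n) ℝ | ∃ A ∈ C,
          M = Matrix.vecMulVec (A.indicator fun _ => (1 : ℝ))
                (A.indicator fun _ => (1 : ℝ))} : Set (Matrix (Fin n) (Fin n) ℝ))
      = {Sig : Matrix (Fin n) (Fin n) ℝ | Sig.IsSymm ∧
          ∀ i j p q : Fin n, lca i j = lca p q → Sig i j = Sig p q} :=
  brownian_tree_span_eq_general n C lca hlca
end

section
/- Let n ≥ 3 and let W = (w_{ij}) be a positive definite real symmetric n×n matrix. Let R = {3,…,n}, let W_{R,R} denote the principal submatrix of W on rows and columns in R, let W_{1,R} be the row vector (w_{1j})_{j∈R} and W_{R,2} the column vector (w_{i2})_{i∈R}. Define the symmetric matrix Ǩ by ǩ_{ij} = w_{ij} for all (i,j) with {i,j} ≠ {1,2}, and ǩ_{12} = ǩ_{21} = W_{1,R}·W_{R,R}⁻¹·W_{R,2}. Then Ǩ is positive definite and its inverse satisfies (Ǩ⁻¹)_{12} = 0. In particular, Ǩ is the dual maximum likelihood estimate of the concentration matrix for the linear covariance model L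 = {Σ ∈ S^n : σ_{12} = 0}, and the dual ML degree of this model is one. -/
/-! The Schur complement of `W` with respect to `R = {3,…,n}` is `S = A - B D⁻¹ Bᵀ`, where
`A`, `B`, `D` are the blocks of `W` along `{1,2} ⊔ R`. The matrix `Ǩ` has the same `B` and `D`, and
its top-left block `B D⁻¹ Bᵀ + diag S` is chosen so that its Schur complement is `diag S`. Since
`S` is positive definite, so is `diag S`, hence so is `Ǩ`; and the `{1,2}` block of `Ǩ⁻¹` is the
inverse of that Schur complement, which is diagonal. -/

open Matrix

/-- The dual MLE for the model `σ₁₂ = 0`: it agrees with `W` in all entries except the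
`(1,2)` and `(2,1)` entries, which are replaced by `W_{1,R} W_{R,R}⁻¹ W_{R,2}` where
`R = {3,…,n}` (here the first two indices of `Fin (n+3)` play the role of `1, 2`). -/
noncomputable def dualMLEonePair (n : ℕ) (W : Matrix (Fin (n + 3)) (Fin (n + 3)) ℝ) :
    Matrix (Fin (n + 3)) (Fin (n + 3)) ℝ :=
  let Wrr : Matrix {i : Fin (n + 3) // i ≠ 0 ∧ i ≠ 1}
      {i : Fin (n + 3) // i ≠ 0 ∧ i ≠ 1} ℝ :=
    Matrix.of fun a b => W a.1 b.1
  let k12 : ℝ := ∑ a : {i : Fin (n + 3) // i ≠ 0 ∧ i ≠ 1},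
    ∑ b : {i : Fin (n + 3) // i ≠ 0 ∧ i ≠ 1}, W 0 a.1 * Wrr⁻¹ a b * W b.1 1
  Matrix.of fun i j =>
    if (i = 0 ∧ j = 1) ∨ (i = 1 ∧ j = 0) then k12 else W i j

open scoped ComplexOrder

namespace Matrix

theorem IsHermitian.eq_fromBlocks {m r α : Type*} [InvolutiveStar α]
    {M : Matrix (m ⊕ r) (m ⊕ r) α} (hM : M.IsHermitian) :
    M = Matrix.fromBlocks M.toBlocks₁₁ M.toBlocks₁₂ M.toBlocks₁₂ᴴ M.toBlocks₂₂ := by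
  rw [← fromBlocks_toBlocks M] at hM
  conv_lhs => rw [← fromBlocks_toBlocks M, ← (isHermitian_fromBlocks_iff.1 hM).2.1]

variable {m r 𝕜 : Type*} [Fintype m] [DecidableEq m] [Fintype r] [DecidableEq r] [RCLike 𝕜]

theorem posDef_fromBlocks₂₂_iff (A : Matrix m m 𝕜) (B : Matrix m r 𝕜) {D : Matrix r r 𝕜}
    (hD : D.PosDef) :
    (fromBlocks A B Bᴴ D).PosDef ↔ (A - B * D⁻¹ * Bᴴ).PosDef := by
  let := hD.isUnit.invertible
  have hunit : IsUnit (fromBlocks A B Bᴴ D) ↔ IsUnit (A - B * D⁻¹ * Bᴴ) := by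
    rw [isUnit_fromBlocks_iff_of_invertible₂₂, invOf_eq_nonsing_inv]
  have hpsd := PosDef.fromBlocks₂₂ A B hD
  exact ⟨fun h ↦ (hpsd.1 h.posSemidef).posDef_iff_isUnit.2 (hunit.1 h.isUnit),
    fun h ↦ (hpsd.2 h.posSemidef).posDef_iff_isUnit.2 (hunit.2 h.isUnit)⟩

theorem toBlocks₁₁_inv_fromBlocks {α : Type*} [CommRing α] (A : Matrix m m α) (B : Matrix m r α)
    (C : Matrix r m α) {D : Matrix r r α} (hD : IsUnit D) (hS : IsUnit (A - B * D⁻¹ * C)) :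
    (fromBlocks A B C D)⁻¹.toBlocks₁₁ = (A - B * D⁻¹ * C)⁻¹ := by
  let := hD.invertible
  let : Invertible (A - B * ⅟D * C) := by rw [invOf_eq_nonsing_inv]; exact hS.invertible
  let := fromBlocks₂₂Invertible A B C D
  rw [← invOf_eq_nonsing_inv, invOf_fromBlocks₂₂_eq, toBlocks_fromBlocks₁₁, invOf_eq_nonsing_inv,
    invOf_eq_nonsing_inv]

theorem PosDef.fromBlocks_diagonal_schur {A : Matrix m m 𝕜} {B : Matrix m r 𝕜} {D : Matrix r r 𝕜}
    (hW : (fromBlocks A B Bᴴ D).PosDef) :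
    (fromBlocks (B * D⁻¹ * Bᴴ + diagonal (A - B * D⁻¹ * Bᴴ).diag) B Bᴴ D).PosDef ∧
      (fromBlocks (B * D⁻¹ * Bᴴ + diagonal (A - B * D⁻¹ * Bᴴ).diag) B Bᴴ D)⁻¹.toBlocks₁₁ =
        (diagonal (A - B * D⁻¹ * Bᴴ).diag)⁻¹ := by
  set S := A - B * D⁻¹ * Bᴴ
  have hD : D.PosDef := by
    have h₂₂ : (fromBlocks A B Bᴴ D).toBlocks₂₂.PosDef := hW.submatrix Sum.inr_injective
    rwa [toBlocks_fromBlocks₂₂] at h₂₂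
  have hS : S.PosDef := (posDef_fromBlocks₂₂_iff A B hD).1 hW
  have hSK : B * D⁻¹ * Bᴴ + diagonal S.diag - B * D⁻¹ * Bᴴ = diagonal S.diag := by abel
  have hSKpos : (diagonal S.diag).PosDef := PosDef.diagonal fun i ↦ hS.diag_pos
  refine ⟨(posDef_fromBlocks₂₂_iff _ B hD).2 (by rwa [hSK]), ?_⟩
  rw [toBlocks₁₁_inv_fromBlocks _ _ _ hD.isUnit (by rw [hSK]; exact hSKpos.isUnit), hSK]

end Matrix

def pairSumComplEquiv {ι : Type*} [DecidableEq ι] {i j : ι} (hij : i ≠ j) :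
    Fin 2 ⊕ {k : ι // k ≠ i ∧ k ≠ j} ≃ ι where
  toFun := Sum.elim ![i, j] Subtype.val
  invFun k := if hi : k = i then .inl 0 else if hj : k = j then .inl 1 else .inr ⟨k, hi, hj⟩
  left_inv := by
    rintro (k | ⟨k, hi, hj⟩)
    · fin_cases k <;> simp [hij.symm]
    · simp [hi, hj]
  right_inv k := by
    by_cases hi : k = i
    · simp [hi]
    · by_cases hj : k = j <;> simp [hi, hj, hij.symm]

theorem submatrix_dualMLEonePair {n : ℕ} {W : Matrix (Fin (n + 3)) (Fin (n + 3)) ℝ}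
    (hW : W.IsHermitian) {A : Matrix (Fin 2) (Fin 2) ℝ}
    {B : Matrix (Fin 2) {i : Fin (n + 3) // i ≠ 0 ∧ i ≠ 1} ℝ}
    {D : Matrix {i : Fin (n + 3) // i ≠ 0 ∧ i ≠ 1} {i : Fin (n + 3) // i ≠ 0 ∧ i ≠ 1} ℝ}
    (hblk : W.submatrix (pairSumComplEquiv zero_ne_one) (pairSumComplEquiv zero_ne_one) =
      fromBlocks A B Bᴴ D) :
    (dualMLEonePair n W).submatrix (pairSumComplEquiv zero_ne_one)
        (pairSumComplEquiv zero_ne_one) =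
      fromBlocks (B * D⁻¹ * Bᴴ + diagonal (A - B * D⁻¹ * Bᴴ).diag) B Bᴴ D := by
  set e := pairSumComplEquiv (zero_ne_one : (0 : Fin (n + 3)) ≠ 1)
  have hentry x y : W (e x) (e y) = fromBlocks A B Bᴴ D x y := by rw [← hblk]; rfl
  have hB i a : B i a = W (![0, 1] i) a.1 := (hentry (.inl i) (.inr a)).symm
  have hBt a j : Bᴴ a j = W a.1 (![0, 1] j) := (hentry (.inr a) (.inl j)).symm
  have hA i j : A i j = W (![0, 1] i) (![0, 1] j) := (hentry (.inl i) (.inl j)).symm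
  have hD : D = of fun a b ↦ W a.1 b.1 := by ext a b; exact (hentry (.inr a) (.inr b)).symm
  have h01 : (B * D⁻¹ * Bᴴ) 0 1 = ∑ a, ∑ b, W 0 a.1 * D⁻¹ a b * W b.1 1 := by
    simp only [mul_apply, Finset.sum_mul]
    rw [Finset.sum_comm]
    simp only [hB, hBt]
    rfl
  have hDherm : D.IsHermitian := hD ▸ hW.submatrix _
  have h10 : (B * D⁻¹ * Bᴴ) 1 0 = (B * D⁻¹ * Bᴴ) 0 1 := by
    simpa using (isHermitian_mul_mul_conjTranspose B hDherm.inv).apply 0 1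
  ext (i | a) (j | b)
  · rw [submatrix_apply, fromBlocks_apply₁₁, Matrix.add_apply]
    revert i j
    simp only [Fin.forall_fin_two]
    refine ⟨⟨?_, ?_⟩, ?_, ?_⟩
    · simp [e, pairSumComplEquiv, dualMLEonePair, hA]
    · rw [diagonal_apply_ne _ (by decide), add_zero, h01]
      simp [e, pairSumComplEquiv, dualMLEonePair, hD]
    · rw [diagonal_apply_ne _ (by decide), add_zero, h10, h01]
      simp [e, pairSumComplEquiv, dualMLEonePair, hD]
    · simp [e, pairSumComplEquiv, dualMLEonePair, hA]
  · rw [submatrix_apply, fromBlocks_apply₁₂, hB]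
    simp [e, pairSumComplEquiv, dualMLEonePair, b.2.1, b.2.2]
  · rw [submatrix_apply, fromBlocks_apply₂₁, hBt]
    simp [e, pairSumComplEquiv, dualMLEonePair, a.2.1, a.2.2]
  · rw [submatrix_apply, fromBlocks_apply₂₂, hD]
    simp [e, pairSumComplEquiv, dualMLEonePair, a.2.1, a.2.2]

/-- For `n ≥ 3` and positive definite `W`, the matrix `Ǩ` obtained from `W` by replacing
its `(1,2)` entry with `W_{1,R} W_{R,R}⁻¹ W_{R,2}`, `R = {3,…,n}`, is positive definite
and its inverse satisfies `(Ǩ⁻¹)₁₂ = 0`.  Hence `Ǩ` is the dual maximum likelihood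
estimate of the concentration matrix for the model `L = {Σ : σ₁₂ = 0}`, and the dual ML
degree of this model is one. -/
theorem dual_MLE_one_zero_restriction
    (n : ℕ) (W : Matrix (Fin (n + 3)) (Fin (n + 3)) ℝ) (hW : W.PosDef) :
    (dualMLEonePair n W).PosDef ∧ (dualMLEonePair n W)⁻¹ 0 1 = 0 := by
  set e := pairSumComplEquiv (zero_ne_one : (0 : Fin (n + 3)) ≠ 1)
  have hWblk := (hW.isHermitian.submatrix e).eq_fromBlocks
  obtain ⟨hKpos, hKinv⟩ := (hWblk ▸ hW.submatrix e.injective).fromBlocks_diagonal_schur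
  rw [← submatrix_dualMLEonePair hW.isHermitian hWblk] at hKpos hKinv
  refine ⟨?_, ?_⟩
  · have := hKpos.submatrix e.symm.injective
    rwa [submatrix_submatrix, Equiv.self_comp_symm, submatrix_id_id] at this
  · have h01 : (dualMLEonePair n W)⁻¹ 0 1 =
        ((dualMLEonePair n W).submatrix e e)⁻¹.toBlocks₁₁ 0 1 := by
      rw [inv_submatrix_equiv]; rfl
    rw [h01, hKinv, inv_diagonal, diagonal_apply_ne _ zero_ne_one]
end
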